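/- Let x : ℝ → ℝ³ be C³ with |x'(t)| ≤ v₀ < 1 for all t and with x'' compactly supported, and define K(p) = (1/i) ∫_ℝ [ (ψ_tt(p,t)/ψ_t(p,t)²) x'(t) − (1/ψ_t(p,t)) x''(t) ] e^{iψ(p,t)} dt for p ≠ 0. Then there is a constant C such that |K(p)| ≤ C/|p|² for all p with |p| ≥ 1. -/

import Mathlib

open MeasureTheory Complex

noncomputable section

abbrev E3 := EuclideanSpace ℝ (Fin 3)
abbrev C3 := EuclideanSpace ℂ (Fin 3)

/-- The inclusion `ℝ³ → ℂ³`. -/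
def cmap (v : E3) : C3 := WithLp.toLp 2 (fun i => (v i : ℂ))

/-- The phase `ψ(p,t) = |p| t − p·x(t)`. -/
def psi (x : ℝ → E3) (p : E3) (t : ℝ) : ℝ := ‖p‖ * t - (inner ℝ p (x t) : ℝ)

/-- `ψ_t(p,t) = |p| − p·x'(t)`. -/
def psit (x : ℝ → E3) (p : E3) (t : ℝ) : ℝ := ‖p‖ - (inner ℝ p (deriv x t) : ℝ)

/-- `ψ_tt(p,t) = −p·x''(t)`. -/
def psitt (x : ℝ → E3) (p : E3) (t : ℝ) : ℝ := -(inner ℝ p (deriv (deriv x) t) : ℝ)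

/-- `K(p) = (1/i) ∫ [ (ψ_tt/ψ_t²) x'(t) − (1/ψ_t) x''(t) ] e^{iψ(p,t)} dt`. -/
def Krad (x : ℝ → E3) (p : E3) : C3 :=
  (1 / Complex.I) •
    ∫ t : ℝ, Complex.exp (Complex.I * (psi x p t : ℂ)) •
      cmap ((psitt x p t / (psit x p t)^2) • deriv x t
            - (psit x p t)⁻¹ • deriv (deriv x) t)

def cmapLI : E3 →ₗᵢ[ℝ] C3 where
  toFun := cmap
  map_add' u v := by ext i; simp [cmap]
  map_smul' r v := by ext i; simp [cmap, Complex.real_smul]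
  norm_map' v := by
    simp only [EuclideanSpace.norm_eq]
    congr 1
    exact Finset.sum_congr rfl fun i _ => by
      show ‖((v i : ℝ) : ℂ)‖ ^ 2 = _
      rw [Complex.norm_real]

lemma cmap_eq (v : E3) : cmap v = cmapLI v := rfl

lemma cmap_real_smul (r : ℝ) (v : E3) : (r : ℂ) • cmap v = cmap (r • v) := by
  rw [cmap_eq, cmap_eq, cmapLI.map_smul]
  ext i
  simp [Complex.real_smul]

lemma cmap_norm (v : E3) : ‖cmap v‖ = ‖v‖ := cmapLI.norm_map v

set_option maxHeartbeats 1000000 in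
/-- for a `C³` trajectory with `|x'| ≤ v₀ < 1` and compactly supported
acceleration, `|K(p)| ≤ C/|p|²` for `|p| ≥ 1`. -/
theorem Krad_decay_two
    (x : ℝ → E3) (hx : ContDiff ℝ 3 x)
    (v₀ : ℝ) (hv₀ : v₀ < 1) (hbd : ∀ t, ‖deriv x t‖ ≤ v₀)
    (hsupp : HasCompactSupport (deriv (deriv x))) :
    ∃ C : ℝ, ∀ p : E3, 1 ≤ ‖p‖ → ‖Krad x p‖ ≤ C / ‖p‖^2 := by
  -- regularity
  rw [show (3 : WithTop ℕ∞) = 2 + 1 from rfl, contDiff_succ_iff_deriv] at hx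
  obtain ⟨hd1, -, h2⟩ := hx
  rw [show (2 : WithTop ℕ∞) = 1 + 1 from rfl, contDiff_succ_iff_deriv] at h2
  obtain ⟨hd2, -, h1⟩ := h2
  rw [contDiff_one_iff_deriv] at h1
  obtain ⟨hd3, c3⟩ := h1
  set x1 := deriv x with hx1def
  set x2 := deriv (deriv x) with hx2def
  set x3 := deriv (deriv (deriv x)) with hx3def
  have cont1 : Continuous x1 := hd2.continuous
  have cont2 : Continuous x2 := hd3.continuous
  have hv0 : 0 ≤ v₀ := le_trans (norm_nonneg _) (hbd 0)
  set c := 1 - v₀ with hcdef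
  have hc : 0 < c := by simp [hcdef]; linarith
  -- bounds on x2, x3
  obtain ⟨M₂, hM2⟩ := cont2.bounded_above_of_compact_support hsupp
  obtain ⟨M₃, hM3⟩ := c3.bounded_above_of_compact_support hsupp.deriv
  have hM2n : 0 ≤ M₂ := le_trans (norm_nonneg _) (hM2 0)
  have hM3n : 0 ≤ M₃ := le_trans (norm_nonneg _) (hM3 0)
  -- interval containing the support
  obtain ⟨R, hR⟩ := hsupp.isCompact.isBounded.subset_closedBall 0
  set b := |R| + 1 with hbdef
  set a := -b with hadef
  have hab : a < b := by
    have : (0:ℝ) < b := by positivity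
    simp [hadef]; linarith
  have hsub : tsupport x2 ⊆ Set.Ioo a b := by
    intro t ht
    have := hR ht
    rw [Real.closedBall_eq_Icc] at this
    have h1 := this.1; have h2 := this.2
    have hRa : R ≤ |R| := le_abs_self R
    constructor
    · simp only [hadef, hbdef]; have : -|R| ≤ -R := by linarith [neg_abs_le R]
      nlinarith [neg_abs_le R]
    · simp only [hbdef]; linarith
  have hx2a : x2 a = 0 := image_eq_zero_of_notMem_tsupport (fun h => absurd (hsub h).1 (by simp))
  have hx2b : x2 b = 0 := image_eq_zero_of_notMem_tsupport (fun h => absurd (hsub h).2 (by simp))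
  -- the constant
  set C₀ : ℝ := (M₃/c^3 + 3*M₂^2/c^4) * v₀ + 3*M₂/c^3*M₂ + 1/c^2*M₃ with hC₀def
  refine ⟨C₀ * (b - a), fun p hp => ?_⟩
  set P := ‖p‖ with hPdef
  have hP0 : (0:ℝ) < P := lt_of_lt_of_le one_pos hp
  -- pointwise derivative facts
  have hdx1 : ∀ t, HasDerivAt x (x1 t) t := fun t => (hd1 t).hasDerivAt
  have hdx2 : ∀ t, HasDerivAt x1 (x2 t) t := fun t => (hd2 t).hasDerivAt
  have hdx3 : ∀ t, HasDerivAt x2 (x3 t) t := fun t => (hd3 t).hasDerivAt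
  set ψ := psi x p with hψdef
  set ψt := psit x p with hψtdef
  set ψtt := psitt x p with hψttdef
  set ψ3 : ℝ → ℝ := fun t => -(inner ℝ p (x3 t) : ℝ) with hψ3def
  have hdψ : ∀ t, HasDerivAt ψ (ψt t) t := by
    intro t
    have h1 : HasDerivAt (fun t : ℝ => ‖p‖ * t) ‖p‖ t := by
      simpa using (hasDerivAt_id t).const_mul ‖p‖
    have h2 : HasDerivAt (fun t => (inner ℝ p (x t) : ℝ)) ((inner ℝ p (x1 t) : ℝ)) t := by
      simpa using (HasDerivAt.inner ℝ (hasDerivAt_const t p) (hdx1 t))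
    exact h1.sub h2
  have hdψt : ∀ t, HasDerivAt ψt (ψtt t) t := by
    intro t
    have h2 : HasDerivAt (fun t => (inner ℝ p (x1 t) : ℝ)) ((inner ℝ p (x2 t) : ℝ)) t := by
      simpa using (HasDerivAt.inner ℝ (hasDerivAt_const t p) (hdx2 t))
    exact h2.const_sub ‖p‖
  have hdψtt : ∀ t, HasDerivAt ψtt (ψ3 t) t := by
    intro t
    have h2 : HasDerivAt (fun t => (inner ℝ p (x2 t) : ℝ)) ((inner ℝ p (x3 t) : ℝ)) t := by
      simpa using (HasDerivAt.inner ℝ (hasDerivAt_const t p) (hdx3 t))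
    exact h2.neg
  -- lower bound on ψt
  have hψtlb : ∀ t, c * P ≤ ψt t := by
    intro t
    have h1 : (inner ℝ p (x1 t) : ℝ) ≤ P * v₀ := by
      calc (inner ℝ p (x1 t) : ℝ) ≤ ‖p‖ * ‖x1 t‖ := real_inner_le_norm _ _
        _ ≤ P * v₀ := by
            exact mul_le_mul_of_nonneg_left (hbd t) (norm_nonneg p)
    have : ψt t = P - inner ℝ p (x1 t) := rfl
    rw [this]; nlinarith
  have hψtpos : ∀ t, 0 < ψt t := fun t => lt_of_lt_of_le (by positivity) (hψtlb t)
  have hψtne : ∀ t, ψt t ≠ 0 := fun t => (hψtpos t).ne'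
  have hψttb : ∀ t, |ψtt t| ≤ P * M₂ := by
    intro t
    have : |(inner ℝ p (x2 t) : ℝ)| ≤ ‖p‖ * ‖x2 t‖ := abs_real_inner_le_norm _ _
    have h2 := mul_le_mul_of_nonneg_left (hM2 t) (norm_nonneg p)
    have he : ψtt t = -(inner ℝ p (x2 t) : ℝ) := rfl
    calc |ψtt t| = |(inner ℝ p (x2 t) : ℝ)| := by rw [he, abs_neg]
      _ ≤ P * M₂ := le_trans this h2
  have hψ3b : ∀ t, |ψ3 t| ≤ P * M₃ := by
    intro t
    have : |(inner ℝ p (x3 t) : ℝ)| ≤ ‖p‖ * ‖x3 t‖ := abs_real_inner_le_norm _ _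
    have h2 := mul_le_mul_of_nonneg_left (hM3 t) (norm_nonneg p)
    have he : ψ3 t = -(inner ℝ p (x3 t) : ℝ) := rfl
    calc |ψ3 t| = |(inner ℝ p (x3 t) : ℝ)| := by rw [he, abs_neg]
      _ ≤ P * M₃ := le_trans this h2
  -- the functions
  set g : ℝ → E3 := fun t => (ψtt t / (ψt t)^2) • x1 t - (ψt t)⁻¹ • x2 t with hgdef
  set w : ℝ → E3 := fun t => (ψtt t * ((ψt t)⁻¹)^3) • x1 t - ((ψt t)⁻¹)^2 • x2 t with hwdef
  set D : ℝ → E3 := fun t =>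
    (ψ3 t / (ψt t)^3 - 3 * (ψtt t)^2 / (ψt t)^4) • x1 t
      + (3 * ψtt t / (ψt t)^3) • x2 t - ((ψt t)^2)⁻¹ • x3 t with hDdef
  have hwD : ∀ t, HasDerivAt w (D t) t := by
    intro t
    have hinv : HasDerivAt (fun t => (ψt t)⁻¹) (-(ψtt t) / (ψt t)^2) t := (hdψt t).inv (hψtne t)
    have hs1 : HasDerivAt (fun t => ψtt t * ((ψt t)⁻¹)^3)
        (ψ3 t * ((ψt t)⁻¹)^3 + ψtt t * ((3:ℝ) * ((ψt t)⁻¹)^2 * (-(ψtt t) / (ψt t)^2))) t :=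
      (hdψtt t).mul (hinv.pow 3)
    have hs2 : HasDerivAt (fun t => ((ψt t)⁻¹)^2) ((2:ℝ) * ((ψt t)⁻¹)^1 * (-(ψtt t) / (ψt t)^2)) t :=
      hinv.pow 2
    have := (hs1.smul (hdx2 t)).sub (hs2.smul (hdx3 t))
    refine this.congr_deriv ?_
    have hne := hψtne t
    match_scalars <;> field_simp <;> ring
  -- bound on D
  have hDb : ∀ t, ‖D t‖ ≤ C₀ / P^2 := by
    intro t
    have hψt3 : (c*P)^3 ≤ (ψt t)^3 := pow_le_pow_left₀ (by positivity) (hψtlb t) 3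
    have hψt4 : (c*P)^4 ≤ (ψt t)^4 := pow_le_pow_left₀ (by positivity) (hψtlb t) 4
    have hψt2 : (c*P)^2 ≤ (ψt t)^2 := pow_le_pow_left₀ (by positivity) (hψtlb t) 2
    have e1 : |ψ3 t / (ψt t)^3 - 3 * (ψtt t)^2 / (ψt t)^4|
        ≤ M₃/(c^3*P^2) + 3*M₂^2/(c^4*P^2) := by
      have b1 : |ψ3 t / (ψt t)^3| ≤ M₃/(c^3*P^2) := by
        rw [abs_div, abs_of_pos (pow_pos (hψtpos t) 3)]
        calc |ψ3 t| / (ψt t)^3 ≤ (P*M₃) / (c*P)^3 := by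
              apply div_le_div₀ (by positivity) (hψ3b t) (by positivity) hψt3
          _ = M₃/(c^3*P^2) := by field_simp
      have b2 : |3 * (ψtt t)^2 / (ψt t)^4| ≤ 3*M₂^2/(c^4*P^2) := by
        rw [abs_div, abs_of_pos (pow_pos (hψtpos t) 4)]
        rw [abs_mul, _root_.abs_pow, abs_of_pos (by norm_num : (0:ℝ) < 3)]
        calc 3 * |ψtt t|^2 / (ψt t)^4 ≤ (3 * (P*M₂)^2) / (c*P)^4 := by
              apply div_le_div₀ (by positivity) ?_ (by positivity) hψt4
              have := pow_le_pow_left₀ (abs_nonneg _) (hψttb t) 2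
              nlinarith
          _ = 3*M₂^2/(c^4*P^2) := by field_simp
      calc |ψ3 t / (ψt t)^3 - 3 * (ψtt t)^2 / (ψt t)^4|
          ≤ |ψ3 t / (ψt t)^3| + |3 * (ψtt t)^2 / (ψt t)^4| := abs_sub _ _
        _ ≤ M₃/(c^3*P^2) + 3*M₂^2/(c^4*P^2) := add_le_add b1 b2
    have e2 : |3 * ψtt t / (ψt t)^3| ≤ 3*M₂/(c^3*P^2) := by
      rw [abs_div, abs_of_pos (pow_pos (hψtpos t) 3), abs_mul,
        abs_of_pos (by norm_num : (0:ℝ) < 3)]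
      calc 3 * |ψtt t| / (ψt t)^3 ≤ (3 * (P*M₂)) / (c*P)^3 := by
            apply div_le_div₀ (by positivity) (by nlinarith [hψttb t]) (by positivity) hψt3
        _ = 3*M₂/(c^3*P^2) := by field_simp
    have e3 : |((ψt t)^2)⁻¹| ≤ 1/(c^2*P^2) := by
      rw [abs_of_pos (inv_pos.mpr (pow_pos (hψtpos t) 2))]
      rw [inv_eq_one_div]
      calc 1 / (ψt t)^2 ≤ 1 / (c*P)^2 :=
            one_div_le_one_div_of_le (by positivity) hψt2
        _ = 1/(c^2*P^2) := by ring_nf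
    calc ‖D t‖ ≤ ‖(ψ3 t / (ψt t)^3 - 3 * (ψtt t)^2 / (ψt t)^4) • x1 t
          + (3 * ψtt t / (ψt t)^3) • x2 t‖ + ‖((ψt t)^2)⁻¹ • x3 t‖ := norm_sub_le _ _
      _ ≤ ‖(ψ3 t / (ψt t)^3 - 3 * (ψtt t)^2 / (ψt t)^4) • x1 t‖
          + ‖(3 * ψtt t / (ψt t)^3) • x2 t‖ + ‖((ψt t)^2)⁻¹ • x3 t‖ := by
            gcongr; exact norm_add_le _ _
      _ = |ψ3 t / (ψt t)^3 - 3 * (ψtt t)^2 / (ψt t)^4| * ‖x1 t‖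
          + |3 * ψtt t / (ψt t)^3| * ‖x2 t‖ + |((ψt t)^2)⁻¹| * ‖x3 t‖ := by
            simp only [norm_smul, Real.norm_eq_abs]
      _ ≤ (M₃/(c^3*P^2) + 3*M₂^2/(c^4*P^2)) * v₀
          + (3*M₂/(c^3*P^2)) * M₂ + (1/(c^2*P^2)) * M₃ := by
            refine add_le_add (add_le_add ?_ ?_) ?_
            · exact mul_le_mul e1 (hbd t) (norm_nonneg _) (by positivity)
            · exact mul_le_mul e2 (hM2 t) (norm_nonneg _) (by positivity)
            · exact mul_le_mul e3 (hM3 t) (norm_nonneg _) (by positivity)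
      _ = C₀ / P^2 := by rw [hC₀def]; field_simp
  -- the phase factor
  set e : ℝ → ℂ := fun t => Complex.exp (Complex.I * (ψ t : ℂ)) with hedef
  have hde : ∀ t, HasDerivAt e (e t * (Complex.I * (ψt t : ℂ))) t := by
    intro t
    have h1 : HasDerivAt (fun t : ℝ => Complex.I * (ψ t : ℂ)) (Complex.I * (ψt t : ℂ)) t :=
      ((hdψ t).ofReal_comp).const_mul Complex.I
    simpa [hedef] using h1.cexp
  set F : ℝ → C3 := fun t => e t • cmap (g t) with hFdef
  set H : ℝ → C3 := fun t => e t • cmap (w t) with hHdef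
  have hcw : ∀ t, HasDerivAt (fun t => cmap (w t)) (cmap (D t)) t := fun t =>
    (cmapLI.toContinuousLinearMap.hasFDerivAt.comp_hasDerivAt t (hwD t))
  have hkey : ∀ t, cmap (g t) = (ψt t : ℂ) • cmap (w t) := by
    intro t
    rw [cmap_real_smul]
    have hne := hψtne t
    have : g t = ψt t • w t := by
      show (ψtt t / (ψt t)^2) • x1 t - (ψt t)⁻¹ • x2 t
        = ψt t • ((ψtt t * ((ψt t)⁻¹)^3) • x1 t - ((ψt t)⁻¹)^2 • x2 t)
      match_scalars <;> field_simp <;> ring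
    rw [this]
  have hH' : ∀ t, HasDerivAt H (Complex.I • F t + e t • cmap (D t)) t := by
    intro t
    have h := (hde t).smul (hcw t)
    refine h.congr_deriv (Eq.symm ?_)
    rw [add_comm]
    congr 1
    rw [hFdef]
    show Complex.I • (e t • cmap (g t)) = _
    rw [hkey t, smul_smul, smul_smul]
    congr 1
    ring
  -- continuity
  have hcψ : Continuous ψ := by
    have : ψ = fun t => ‖p‖ * t - (inner ℝ p (x t) : ℝ) := rfl
    rw [this]
    exact (continuous_const.mul continuous_id).sub (continuous_const.inner hd1.continuous)
  have hcψt : Continuous ψt := by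
    have : ψt = fun t => ‖p‖ - (inner ℝ p (x1 t) : ℝ) := rfl
    rw [this]
    exact continuous_const.sub (continuous_const.inner cont1)
  have hcψtt : Continuous ψtt := by
    have : ψtt = fun t => -(inner ℝ p (x2 t) : ℝ) := rfl
    rw [this]
    exact (continuous_const.inner cont2).neg
  have hcψ3 : Continuous ψ3 := (continuous_const.inner c3).neg
  have hce : Continuous e := by
    have : e = fun t => Complex.exp (Complex.I * (ψ t : ℂ)) := rfl
    rw [this]
    exact (continuous_const.mul (Complex.continuous_ofReal.comp hcψ)).cexp
  have hcg : Continuous g := by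
    have : g = fun t => (ψtt t / (ψt t)^2) • x1 t - (ψt t)⁻¹ • x2 t := rfl
    rw [this]
    exact ((hcψtt.div (hcψt.pow 2) (fun t => pow_ne_zero _ (hψtne t))).smul cont1).sub
      ((hcψt.inv₀ hψtne).smul cont2)
  have hcD : Continuous D := by
    have : D = fun t => (ψ3 t / (ψt t)^3 - 3 * (ψtt t)^2 / (ψt t)^4) • x1 t
        + (3 * ψtt t / (ψt t)^3) • x2 t - ((ψt t)^2)⁻¹ • x3 t := rfl
    rw [this]
    have k1 := hcψ3.div (hcψt.pow 3) (fun t => pow_ne_zero _ (hψtne t))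
    have k2 := ((continuous_const.mul (hcψtt.pow 2)).div (hcψt.pow 4)
        (fun t => pow_ne_zero _ (hψtne t)) : Continuous fun t => 3 * (ψtt t)^2 / (ψt t)^4)
    have k3 := ((continuous_const.mul hcψtt).div (hcψt.pow 3)
        (fun t => pow_ne_zero _ (hψtne t)) : Continuous fun t => 3 * ψtt t / (ψt t)^3)
    have k4 := (hcψt.pow 2).inv₀ (fun t => pow_ne_zero _ (hψtne t))
    exact (((k1.sub k2).smul cont1).add (k3.smul cont2)).sub (k4.smul c3)
  have hcF : Continuous F := hce.smul (cmapLI.continuous.comp hcg)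
  have hceD : Continuous (fun t => e t • cmap (D t)) := hce.smul (cmapLI.continuous.comp hcD)
  -- boundary values
  have hψtta : ψtt a = 0 := by
    have : ψtt a = -(inner ℝ p (x2 a) : ℝ) := rfl
    rw [this, hx2a]; simp
  have hψttb2 : ψtt b = 0 := by
    have : ψtt b = -(inner ℝ p (x2 b) : ℝ) := rfl
    rw [this, hx2b]; simp
  have hwa : w a = 0 := by
    have : w a = (ψtt a * ((ψt a)⁻¹)^3) • x1 a - ((ψt a)⁻¹)^2 • x2 a := rfl
    rw [this, hψtta, hx2a]; simp
  have hwb : w b = 0 := by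
    have : w b = (ψtt b * ((ψt b)⁻¹)^3) • x1 b - ((ψt b)⁻¹)^2 • x2 b := rfl
    rw [this, hψttb2, hx2b]; simp
  -- FTC
  have hFTC : ∫ t in a..b, (Complex.I • F t + e t • cmap (D t)) = H b - H a :=
    intervalIntegral.integral_eq_sub_of_hasDerivAt (fun t _ => hH' t)
      (((hcF.const_smul Complex.I).add hceD).intervalIntegrable a b)
  have hHab : H b - H a = 0 := by
    have ha' : H a = 0 := by
      have : H a = e a • cmap (w a) := rfl
      rw [this, hwa]
      have : cmap 0 = 0 := by ext i; simp [cmap]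
      rw [this, smul_zero]
    have hb' : H b = 0 := by
      have : H b = e b • cmap (w b) := rfl
      rw [this, hwb]
      have : cmap 0 = 0 := by ext i; simp [cmap]
      rw [this, smul_zero]
    rw [ha', hb', sub_zero]
  have hsplit : Complex.I • (∫ t in a..b, F t) + (∫ t in a..b, e t • cmap (D t)) = 0 := by
    rw [← intervalIntegral.integral_smul, ← intervalIntegral.integral_add (f := fun t => Complex.I • F t)
      ((hcF.const_smul Complex.I).intervalIntegrable a b) (hceD.intervalIntegrable a b)]
    rw [hFTC, hHab]
  -- identify Krad with the interval integral
  have hsuppF : ∀ t, t ∉ Set.Ioc a b → F t = 0 := by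
    intro t ht
    have htns : t ∉ tsupport x2 := fun h => ht (Set.Ioo_subset_Ioc_self (hsub h))
    have h2 : x2 t = 0 := image_eq_zero_of_notMem_tsupport htns
    have h3 : ψtt t = 0 := by
      have : ψtt t = -(inner ℝ p (x2 t) : ℝ) := rfl
      rw [this, h2]; simp
    have hgt : g t = 0 := by
      have : g t = (ψtt t / (ψt t)^2) • x1 t - (ψt t)⁻¹ • x2 t := rfl
      rw [this, h3, h2]; simp
    have : F t = e t • cmap (g t) := rfl
    rw [this, hgt]
    have : cmap 0 = 0 := by ext i; simp [cmap]
    rw [this, smul_zero]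
  have hKrad : Krad x p = (1 / Complex.I) • ∫ t : ℝ, F t := rfl
  have hint : (∫ t : ℝ, F t) = ∫ t in a..b, F t := by
    rw [intervalIntegral.integral_of_le hab.le]
    exact (setIntegral_eq_integral_of_forall_compl_eq_zero hsuppF).symm
  -- final estimate
  have hIF : Complex.I • (∫ t in a..b, F t) = -(∫ t in a..b, e t • cmap (D t)) :=
    eq_neg_of_add_eq_zero_left hsplit
  have hJ : ‖∫ t in a..b, e t • cmap (D t)‖ ≤ C₀/P^2 * |b - a| := by
    apply intervalIntegral.norm_integral_le_of_norm_le_const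
    intro t _
    rw [norm_smul, cmap_norm]
    have he1 : ‖e t‖ = 1 := by
      have : e t = Complex.exp (Complex.I * (ψ t : ℂ)) := rfl
      rw [this]
      simp [Complex.norm_exp]
    rw [he1, one_mul]
    exact hDb t
  have hC0nn : 0 ≤ C₀ := by rw [hC₀def]; positivity
  calc ‖Krad x p‖ = ‖(1 / Complex.I) • ∫ t in a..b, F t‖ := by rw [hKrad, hint]
    _ = ‖∫ t in a..b, F t‖ := by
        rw [norm_smul]; simp
    _ = ‖Complex.I • ∫ t in a..b, F t‖ := by
        rw [norm_smul]; simp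
    _ = ‖∫ t in a..b, e t • cmap (D t)‖ := by rw [hIF, norm_neg]
    _ ≤ C₀/P^2 * |b - a| := hJ
    _ = C₀ * (b - a) / P^2 := by
        rw [abs_of_pos (by linarith : (0:ℝ) < b - a)]; ring
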